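/- arXiv:2112.05583 — 3 statements merged into one kernel-verified Lean document; each statement's English description precedes it below -/
import Mathlib

section
/- Let K : X × X → ℝ be a symmetric kernel on a set X and x₁,…,xₙ ∈ X points with invertible kernel matrix Kₙ = (K(xᵢ,xⱼ)). Let ξ and μ be finitely supported signed measures on X, and for w ∈ ℝⁿ let ξ^{[w]} = ξ + Σᵢ wᵢ δ_{xᵢ}. Then E_K(ξ^{[w]} − μ) = E_K(ξ − μ) + wᵀKₙw + 2wᵀp_{K,n}(ξ − μ), where p_{K,n}(ξ−μ) = (P_{K,ξ−μ}(x₁),…,P_{K,ξ−μ}(xₙ))ᵀ; and if Kₙ is positive definite, the minimum over w ∈ ℝⁿ of E_K(ξ^{[w]} − μ) equals E_{K_{|n}}(ξ − μ), the energy of ξ − μ for the conditional kernel K_{|n}. -/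
open Matrix

/-! Expanding the energy of `ξ - μ + Σᵢ wᵢ δ_{xᵢ}` gives a quadratic polynomial in `w` with Hessian
`2 Kₙ` and linear coefficient `2 p_{K,n}(ξ - μ)`. Completing the square, its minimum over `w` is
`E_K(ξ - μ) - pᵀ Kₙ⁻¹ p`, and by bilinearity `pᵀ Kₙ⁻¹ p` is exactly the energy of `ξ - μ` for the
kernel `kₙ(a)ᵀ Kₙ⁻¹ kₙ(b)` that is subtracted from `K` in the conditional kernel. -/

section Energy

variable {X ι κ : Type*} [Fintype ι] [Fintype κ]

/-- The signed measure `Σᵢ vᵢ δ_{sᵢ}` is given by its points `s` and weights `v`. -/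
def energy (C : X → X → ℝ) (s : ι → X) (v : ι → ℝ) : ℝ :=
  ∑ i, ∑ j, v i * v j * C (s i) (s j)

def potential (C : X → X → ℝ) (s : ι → X) (v : ι → ℝ) (y : X) : ℝ :=
  ∑ i, v i * C y (s i)

theorem energy_eq_dotProduct_mulVec (C : X → X → ℝ) (s : ι → X) (v : ι → ℝ) :
    energy C s v = v ⬝ᵥ (Matrix.of (fun i j => C (s i) (s j)) *ᵥ v) := by
  simp only [energy, dotProduct, mulVec, Matrix.of_apply, Finset.mul_sum]
  exact Finset.sum_congr rfl fun i _ => Finset.sum_congr rfl fun j _ => by ring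

theorem energy_sum_elim {C : X → X → ℝ} (hC : ∀ a b, C a b = C b a)
    (s : ι → X) (s' : κ → X) (v : ι → ℝ) (v' : κ → ℝ) :
    energy C (Sum.elim s s') (Sum.elim v v') =
      energy C s v + energy C s' v' + 2 * ∑ j, v' j * potential C s v (s' j) := by
  have hcross : ∑ i, ∑ j, v i * v' j * C (s i) (s' j) = ∑ j, v' j * potential C s v (s' j) := by
    rw [Finset.sum_comm]
    simp only [potential, Finset.mul_sum]
    exact Finset.sum_congr rfl fun j _ => Finset.sum_congr rfl fun i _ => by rw [hC]; ring
  have hcross' : ∑ j, ∑ i, v' j * v i * C (s' j) (s i) = ∑ j, v' j * potential C s v (s' j) := by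
    simp only [potential, Finset.mul_sum]
    exact Finset.sum_congr rfl fun j _ => Finset.sum_congr rfl fun i _ => by ring
  simp only [energy, Fintype.sum_sum_type, Sum.elim_inl, Sum.elim_inr, Finset.sum_add_distrib,
    hcross, hcross']
  ring

theorem energy_sub (C D : X → X → ℝ) (s : ι → X) (v : ι → ℝ) :
    energy (fun a b => C a b - D a b) s v = energy C s v - energy D s v := by
  simp only [energy, mul_sub, Finset.sum_sub_distrib]

theorem energy_bilinear_kernel {m : Type*} [Fintype m] (k : X → m → ℝ) (M : Matrix m m ℝ)
    (s : ι → X) (v : ι → ℝ) :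
    energy (fun a b => k a ⬝ᵥ (M *ᵥ k b)) s v =
      (∑ i, v i • k (s i)) ⬝ᵥ (M *ᵥ ∑ i, v i • k (s i)) := by
  simp only [energy, mulVec_sum, mulVec_smul, sum_dotProduct, dotProduct_sum, smul_dotProduct,
    dotProduct_smul, smul_eq_mul, Finset.mul_sum]
  rw [Finset.sum_comm]
  exact Finset.sum_congr rfl fun i _ => Finset.sum_congr rfl fun j _ => by ring

end Energy

theorem Matrix.PosDef.isLeast_range_quadratic {m : Type*} [Fintype m] [DecidableEq m]
    {A : Matrix m m ℝ} (hA : A.PosDef) (c : ℝ) (p : m → ℝ) :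
    IsLeast (Set.range fun w => c + w ⬝ᵥ (A *ᵥ w) + 2 * (w ⬝ᵥ p)) (c - p ⬝ᵥ (A⁻¹ *ᵥ p)) := by
  set u := A⁻¹ *ᵥ p
  have hAu : A *ᵥ u = p := by
    rw [mulVec_mulVec, mul_nonsing_inv _ ((isUnit_iff_isUnit_det A).mp hA.isUnit), one_mulVec]
  have hAT : Aᵀ = A := (isHermitian_iff_isSymm.mp hA.isHermitian).eq
  have hsymm : ∀ w, u ⬝ᵥ (A *ᵥ w) = w ⬝ᵥ p := fun w => by
    rw [dotProduct_mulVec, ← hAT, vecMul_transpose, hAu, dotProduct_comm]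
  have hsquare : ∀ w, c + w ⬝ᵥ (A *ᵥ w) + 2 * (w ⬝ᵥ p) =
      c - p ⬝ᵥ u + (w + u) ⬝ᵥ (A *ᵥ (w + u)) := fun w => by
    rw [mulVec_add, add_dotProduct, dotProduct_add, dotProduct_add, hsymm, hAu,
      dotProduct_comm u p]
    ring
  refine ⟨⟨-u, ?_⟩, ?_⟩
  · simp only [hsquare, neg_add_cancel, mulVec_zero, dotProduct_zero, add_zero]
  · rintro _ ⟨w, rfl⟩
    simp only [hsquare]
    have hnonneg := hA.posSemidef.dotProduct_mulVec_nonneg (w + u)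
    rw [star_trivial] at hnonneg
    linarith

theorem energy_augmented_design_general {X : Type*} (K : X → X → ℝ)
    (hSym : ∀ a b, K a b = K b a)
    (n : ℕ) (x : Fin n → X)
    (N : ℕ) (t : Fin N → X) (wXi wMu : Fin N → ℝ) :
    letI Kn : Matrix (Fin n) (Fin n) ℝ := Matrix.of fun i j => K (x i) (x j)
    letI kn : X → Fin n → ℝ := fun a i => K a (x i)
    letI Kcond : X → X → ℝ := fun a b => K a b - kn a ⬝ᵥ (Kn⁻¹ *ᵥ kn b)
    letI dlt : Fin N → ℝ := fun i => wXi i - wMu i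
    letI E : (Fin n → ℝ) → ℝ := fun w =>
      ∑ i : Fin N ⊕ Fin n, ∑ j : Fin N ⊕ Fin n,
        Sum.elim dlt w i * Sum.elim dlt w j * K (Sum.elim t x i) (Sum.elim t x j)
    letI pn : Fin n → ℝ := fun i => ∑ j, dlt j * K (x i) (t j)
    (∀ w : Fin n → ℝ,
      E w = (∑ i, ∑ j, dlt i * dlt j * K (t i) (t j))
              + w ⬝ᵥ (Kn *ᵥ w) + 2 * (w ⬝ᵥ pn)) ∧
    (Kn.PosDef →
      IsLeast (Set.range E) (∑ i, ∑ j, dlt i * dlt j * Kcond (t i) (t j))) := by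
  set Kn : Matrix (Fin n) (Fin n) ℝ := Matrix.of fun i j => K (x i) (x j)
  set kn : X → Fin n → ℝ := fun a i => K a (x i)
  set dlt : Fin N → ℝ := fun i => wXi i - wMu i
  set pn : Fin n → ℝ := fun i => ∑ j, dlt j * K (x i) (t j)
  have hexpand : ∀ w, energy K (Sum.elim t x) (Sum.elim dlt w) =
      energy K t dlt + w ⬝ᵥ (Kn *ᵥ w) + 2 * (w ⬝ᵥ pn) := fun w => by
    rw [energy_sum_elim hSym, energy_eq_dotProduct_mulVec K x w]
    rfl
  refine ⟨hexpand, fun hPD => ?_⟩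
  have hpn : ∑ i, dlt i • kn (t i) = pn := by
    ext a
    simp only [Finset.sum_apply, Pi.smul_apply, smul_eq_mul, pn, kn, hSym (x a)]
  have hcond : energy (fun a b => K a b - kn a ⬝ᵥ (Kn⁻¹ *ᵥ kn b)) t dlt =
      energy K t dlt - pn ⬝ᵥ (Kn⁻¹ *ᵥ pn) := by
    rw [energy_sub, energy_bilinear_kernel, hpn]
  change IsLeast (Set.range fun w => energy K (Sum.elim t x) (Sum.elim dlt w))
    (energy (fun a b => K a b - kn a ⬝ᵥ (Kn⁻¹ *ᵥ kn b)) t dlt)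
  simpa only [hexpand, hcond] using hPD.isLeast_range_quadratic (energy K t dlt) pn

/-- Expansion of the energy of `ξ^{[w]} - μ` where `ξ^{[w]} = ξ + Σᵢ wᵢ δ_{xᵢ}`:
`E_K(ξ^{[w]} - μ) = E_K(ξ-μ) + wᵀKₙw + 2wᵀp_{K,n}(ξ-μ)`; and if `Kₙ` is positive
definite, the minimum over `w` of `E_K(ξ^{[w]} - μ)` equals `E_{K_{|n}}(ξ-μ)`,
the energy of `ξ-μ` for the conditional kernel. -/
theorem energy_augmented_design {X : Type*} (K : X → X → ℝ)
    (hSym : ∀ a b, K a b = K b a)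
    (n : ℕ) (x : Fin n → X)
    (hInv : IsUnit (Matrix.of fun i j : Fin n => K (x i) (x j)).det)
    (N : ℕ) (t : Fin N → X) (wXi wMu : Fin N → ℝ) :
    letI Kn : Matrix (Fin n) (Fin n) ℝ := Matrix.of fun i j => K (x i) (x j)
    letI kn : X → Fin n → ℝ := fun a i => K a (x i)
    letI Kcond : X → X → ℝ := fun a b => K a b - kn a ⬝ᵥ (Kn⁻¹ *ᵥ kn b)
    letI dlt : Fin N → ℝ := fun i => wXi i - wMu i
    letI E : (Fin n → ℝ) → ℝ := fun w =>
      ∑ i : Fin N ⊕ Fin n, ∑ j : Fin N ⊕ Fin n,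
        Sum.elim dlt w i * Sum.elim dlt w j * K (Sum.elim t x i) (Sum.elim t x j)
    letI pn : Fin n → ℝ := fun i => ∑ j, dlt j * K (x i) (t j)
    (∀ w : Fin n → ℝ,
      E w = (∑ i, ∑ j, dlt i * dlt j * K (t i) (t j))
              + w ⬝ᵥ (Kn *ᵥ w) + 2 * (w ⬝ᵥ pn)) ∧
    (Kn.PosDef →
      IsLeast (Set.range E) (∑ i, ∑ j, dlt i * dlt j * Kcond (t i) (t j))) :=
  energy_augmented_design_general K hSym n x N t wXi wMu
end

section
/- Let T be a finite set, K : T × T → ℝ a symmetric kernel whose full kernel matrix on T is positive definite (K is strictly positive definite on T), and x₁,…,xₙ ∈ T. Let ξ and μ be signed measures on T with equal total mass whose supports are disjoint from {x₁,…,xₙ}. Then the energy of ξ − μ for the conditional kernel K_{|n} satisfies E_{K_{|n}}(ξ − μ) ≥ 0, with equality if and only if ξ = μ. -/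
open Matrix

lemma key_energy {T : Type*} [Fintype T] [DecidableEq T] (K : T → T → ℝ)
    (hSym : ∀ a b, K a b = K b a)
    (n : ℕ) (x : Fin n → T)
    (hInv : IsUnit (Matrix.of fun i j : Fin n => K (x i) (x j)).det)
    (w : T → ℝ) (c z : Fin n → ℝ)
    (hc : ∀ i, c i = ∑ a, w a * K a (x i))
    (hz : z = -((Matrix.of fun i j : Fin n => K (x i) (x j))⁻¹ *ᵥ c)) :
    ∑ a, ∑ b, w a * w b *
        (K a b - (fun i => K a (x i)) ⬝ᵥ
          ((Matrix.of fun i j : Fin n => K (x i) (x j))⁻¹ *ᵥ fun i => K b (x i)))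
      = ∑ a, ∑ b,
          (w a + ∑ i, if a = x i then z i else 0) *
          (w b + ∑ i, if b = x i then z i else 0) * K a b := by
  set Kn : Matrix (Fin n) (Fin n) ℝ := Matrix.of fun i j : Fin n => K (x i) (x j) with hKn
  set M : Matrix (Fin n) (Fin n) ℝ := Kn⁻¹ with hM
  have hKM : ∀ i k, (∑ j, K (x i) (x j) * M j k) = if i = k then (1:ℝ) else 0 := by
    intro i k
    have h1 : (Kn * M) i k = (1 : Matrix (Fin n) (Fin n) ℝ) i k := by
      rw [hM, Matrix.mul_nonsing_inv _ hInv]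
    simpa [Matrix.mul_apply, Matrix.one_apply, hKn] using h1
  have hzdef : ∀ i, z i = -∑ j, M i j * c j := by
    intro i; rw [hz]; simp [Matrix.mulVec, dotProduct]
  have hKz : ∀ i, (∑ j, K (x i) (x j) * z j) = -(c i) := by
    intro i
    have step : ∑ j, K (x i) (x j) * z j
        = -∑ k, (∑ j, K (x i) (x j) * M j k) * c k := by
      simp_rw [hzdef, mul_neg, Finset.mul_sum, Finset.sum_neg_distrib, neg_inj,
        Finset.sum_mul]
      rw [Finset.sum_comm]
      exact Finset.sum_congr rfl fun j _ => Finset.sum_congr rfl fun k _ => by ring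
    rw [step]
    simp_rw [hKM, ite_mul, one_mul, zero_mul, Finset.sum_ite_eq, Finset.mem_univ,
      if_true]
  set S := ∑ a, ∑ b, w a * w b * K a b with hS
  set δ : T → ℝ := fun a => ∑ i, if a = x i then z i else 0 with hδ
  have hcol : ∀ f : T → ℝ, ∑ b, δ b * f b = ∑ i, z i * f (x i) := by
    intro f
    simp_rw [hδ, Finset.sum_mul, ite_mul, zero_mul]
    rw [Finset.sum_comm]
    simp
  -- inner helper for the LHS
  have h1 : ∀ i, (∑ b, w b * ∑ j, M i j * K b (x j)) = ∑ j, M i j * c j := by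
    intro i
    simp_rw [Finset.mul_sum]
    rw [Finset.sum_comm]
    refine Finset.sum_congr rfl fun j _ => ?_
    rw [hc, Finset.mul_sum]
    exact Finset.sum_congr rfl fun b _ => by ring
  have hzc : ∑ i, z i * c i = -∑ i, ∑ j, M i j * c j * c i := by
    simp_rw [hzdef, neg_mul, Finset.sum_neg_distrib, neg_inj, Finset.sum_mul]
  have hD : (∑ a, ∑ b, w a * w b * ((fun i => K a (x i)) ⬝ᵥ (M *ᵥ fun i => K b (x i))))
      = ∑ i, ∑ j, M i j * c j * c i := by
    simp_rw [dotProduct, Matrix.mulVec, dotProduct]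
    calc ∑ a, ∑ b, w a * w b * ∑ i, K a (x i) * ∑ j, M i j * K b (x j)
        = ∑ a, ∑ i, (w a * K a (x i)) * ∑ b, w b * ∑ j, M i j * K b (x j) := by
          refine Finset.sum_congr rfl fun a _ => ?_
          simp_rw [Finset.mul_sum]
          rw [Finset.sum_comm]
          exact Finset.sum_congr rfl fun i _ => Finset.sum_congr rfl fun b _ =>
            Finset.sum_congr rfl fun j _ => by ring
      _ = ∑ i, ∑ a, (w a * K a (x i)) * ∑ j, M i j * c j := by
          rw [Finset.sum_comm]
          exact Finset.sum_congr rfl fun i _ =>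
            Finset.sum_congr rfl fun a _ => by rw [h1]
      _ = ∑ i, ∑ j, M i j * c j * c i := by
          refine Finset.sum_congr rfl fun i _ => ?_
          rw [← Finset.sum_mul, ← hc, ← Finset.sum_mul, mul_comm]
  have hL : ∑ a, ∑ b, w a * w b *
        (K a b - (fun i => K a (x i)) ⬝ᵥ (M *ᵥ fun i => K b (x i)))
      = S + ∑ i, z i * c i := by
    simp_rw [mul_sub, Finset.sum_sub_distrib]
    rw [hD, hzc, ← hS, sub_eq_add_neg]
  -- cross terms for the RHS
  have hC1 : ∑ a, ∑ b, w a * δ b * K a b = ∑ i, z i * c i := by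
    have : ∀ a, ∑ b, w a * δ b * K a b = ∑ i, z i * (w a * K a (x i)) := by
      intro a
      rw [← hcol fun b => w a * K a b]
      exact Finset.sum_congr rfl fun b _ => by ring
    simp_rw [this]
    rw [Finset.sum_comm]
    refine Finset.sum_congr rfl fun i _ => ?_
    rw [← Finset.mul_sum, hc]
  have hC2 : ∑ a, ∑ b, δ a * w b * K a b = ∑ i, z i * c i := by
    have : ∀ a, ∑ b, δ a * w b * K a b = δ a * ∑ b, w b * K b a := by
      intro a
      rw [Finset.mul_sum]
      exact Finset.sum_congr rfl fun b _ => by rw [hSym a b]; ring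
    simp_rw [this]
    rw [hcol fun a => ∑ b, w b * K b a]
    exact Finset.sum_congr rfl fun i _ => by rw [← hc]
  have hQ : ∑ a, ∑ b, δ a * δ b * K a b = -∑ i, z i * c i := by
    have : ∀ a, ∑ b, δ a * δ b * K a b = δ a * ∑ i, z i * K a (x i) := by
      intro a
      calc ∑ b, δ a * δ b * K a b = ∑ b, δ b * (δ a * K a b) :=
            Finset.sum_congr rfl fun b _ => by ring
        _ = ∑ i, z i * (δ a * K a (x i)) := hcol _
        _ = δ a * ∑ i, z i * K a (x i) := by
            rw [Finset.mul_sum]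
            exact Finset.sum_congr rfl fun i _ => by ring
    simp_rw [this]
    rw [hcol fun a => ∑ i, z i * K a (x i), ← Finset.sum_neg_distrib]
    refine Finset.sum_congr rfl fun i _ => ?_
    have : ∑ j, z j * K (x i) (x j) = -(c i) := by
      rw [← hKz i]
      exact Finset.sum_congr rfl fun j _ => by rw [hSym (x i) (x j)]; ring
    rw [this]; ring
  have hR : ∑ a, ∑ b, (w a + δ a) * (w b + δ b) * K a b = S + ∑ i, z i * c i := by
    calc ∑ a, ∑ b, (w a + δ a) * (w b + δ b) * K a b
        = ∑ a, ∑ b, (w a * w b * K a b + w a * δ b * K a b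
            + δ a * w b * K a b + δ a * δ b * K a b) :=
          Finset.sum_congr rfl fun a _ => Finset.sum_congr rfl fun b _ => by ring
      _ = S + ∑ i, z i * c i := by
          simp_rw [Finset.sum_add_distrib]
          rw [hC1, hC2, hQ, ← hS]; ring
  rw [hL, ← hR]

lemma cond_energy_nonneg {T : Type*} [Fintype T] [DecidableEq T] (K : T → T → ℝ)
    (hSym : ∀ a b, K a b = K b a)
    (hSPD : ∀ w : T → ℝ, w ≠ 0 → 0 < ∑ a, ∑ b, w a * w b * K a b)
    (n : ℕ) (x : Fin n → T)
    (hInv : IsUnit (Matrix.of fun i j : Fin n => K (x i) (x j)).det)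
    (w : T → ℝ) (hw0 : ∀ i, w (x i) = 0) :
    0 ≤ (∑ a, ∑ b, w a * w b *
        (K a b - (fun i => K a (x i)) ⬝ᵥ
          ((Matrix.of fun i j : Fin n => K (x i) (x j))⁻¹ *ᵥ fun i => K b (x i)))) ∧
      ((∑ a, ∑ b, w a * w b *
        (K a b - (fun i => K a (x i)) ⬝ᵥ
          ((Matrix.of fun i j : Fin n => K (x i) (x j))⁻¹ *ᵥ fun i => K b (x i)))) = 0
        ↔ w = 0) := by
  set c : Fin n → ℝ := fun i => ∑ a, w a * K a (x i) with hcdef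
  set z : Fin n → ℝ := -((Matrix.of fun i j : Fin n => K (x i) (x j))⁻¹ *ᵥ c) with hzdef
  set w' : T → ℝ := fun a => w a + ∑ i, if a = x i then z i else 0 with hw'def
  have key := key_energy K hSym n x hInv w c z (fun i => rfl) rfl
  have hfwd : w' = 0 → w = 0 := by
    intro h; funext a
    by_cases ha : ∃ i, a = x i
    · obtain ⟨i, rfl⟩ := ha; exact hw0 i
    · have h2 := congrFun h a
      have hzero : (∑ i, if a = x i then z i else 0) = 0 :=
        Finset.sum_eq_zero fun i _ => if_neg fun h' => ha ⟨i, h'⟩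
      simpa [hw'def, hzero] using h2
  have hback : w = 0 → w' = 0 := by
    intro h
    have hc0 : c = 0 := by funext i; simp [hcdef, h]
    have hz0 : z = 0 := by rw [hzdef, hc0]; simp
    funext a
    simp [hw'def, h, hz0]
  by_cases hW : w' = 0
  · have hE0 : (∑ a, ∑ b, w a * w b *
        (K a b - (fun i => K a (x i)) ⬝ᵥ
          ((Matrix.of fun i j : Fin n => K (x i) (x j))⁻¹ *ᵥ fun i => K b (x i)))) = 0 := by
      rw [key]
      refine Finset.sum_eq_zero fun a _ => Finset.sum_eq_zero fun b _ => ?_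
      have := congrFun hW a
      simp only [hw'def] at this ⊢
      rw [this]; simp
    exact ⟨le_of_eq hE0.symm, by rw [hE0]; simp [hfwd hW]⟩
  · have hpos : 0 < ∑ a, ∑ b, w a * w b *
        (K a b - (fun i => K a (x i)) ⬝ᵥ
          ((Matrix.of fun i j : Fin n => K (x i) (x j))⁻¹ *ᵥ fun i => K b (x i))) := by
      rw [key]; exact hSPD w' hW
    exact ⟨le_of_lt hpos, ⟨fun h => absurd h (ne_of_gt hpos),
      fun h => absurd (hback h) hW⟩⟩

/-- On a finite set `T`, if `K` is a symmetric kernel that is strictly positive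
definite on `T`, and `ξ`, `μ` are signed measures on `T` (with weights `u`, `v`)
of equal total mass whose supports are disjoint from the design points
`x₁,…,xₙ`, then the energy of `ξ - μ` for the conditional kernel `K_{|n}` is
nonnegative, and vanishes if and only if `ξ = μ`. -/
theorem conditional_energy_separates {T : Type*} [Fintype T] (K : T → T → ℝ)
    (hSym : ∀ a b, K a b = K b a)
    (hSPD : ∀ w : T → ℝ, w ≠ 0 → 0 < ∑ a, ∑ b, w a * w b * K a b)
    (n : ℕ) (x : Fin n → T)
    (hInv : IsUnit (Matrix.of fun i j : Fin n => K (x i) (x j)).det)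
    (u v : T → ℝ) (hmass : ∑ a, u a = ∑ a, v a)
    (hu : ∀ i, u (x i) = 0) (hv : ∀ i, v (x i) = 0) :
    letI Kn : Matrix (Fin n) (Fin n) ℝ := Matrix.of fun i j => K (x i) (x j)
    letI Kcond : T → T → ℝ := fun a b =>
      K a b - (fun i => K a (x i)) ⬝ᵥ (Kn⁻¹ *ᵥ fun i => K b (x i))
    0 ≤ ∑ a, ∑ b, (u a - v a) * (u b - v b) * Kcond a b ∧
      ((∑ a, ∑ b, (u a - v a) * (u b - v b) * Kcond a b) = 0 ↔ u = v) := by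
  classical
  have main := cond_energy_nonneg K hSym hSPD n x hInv (fun a => u a - v a)
    (fun i => by simp [hu i, hv i])
  refine ⟨main.1, main.2.trans ?_⟩
  constructor
  · intro h; funext a
    have := congrFun h a
    simpa [sub_eq_zero] using this
  · intro h; funext a; simp [h]
end

section
/- For every θ > 0, the energy of the uniform measure on [0,1] for the squared Matérn 3/2 kernel satisfies ∫₀¹∫₀¹ (1 + θ|x−y|)²·exp(−2θ|x−y|) dx dy = (1/(4θ²))·[(2θ² + 8θ + 9)·e^{−2θ} + 10θ − 9]; moreover, for every x ∈ [0,1], ∫₀¹ (1 + θ|x−t|)²·exp(−2θ|x−t|) dt = T_θ(x) + T_θ(1−x), where T_θ(u) = (1/(4θ))·[5 − (5 + 6θu + 2θ²u²)·e^{−2θu}]. -/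
/-!
For a radial kernel `f |x - t|` with `F' = f`, splitting `∫₀¹ f |x - t| dt` at `t = x` gives
`F x + F (1 - x) - 2 F 0`; integrating once more with `G' = F` gives the energy
`2 (G 1 - G 0 - F 0)`. For `f u = (1 + θu)² e^{-2θu}` the primitive `F` vanishing at `0` is the
function `T_θ` of the statement, and `G` is again a quadratic times `e^{-2θu}` plus a linear term.
-/

open intervalIntegral

theorem integral_comp_abs_sub_of_hasDerivAt {f F : ℝ → ℝ} (hF : ∀ u, HasDerivAt F (f u) u)
    (hf : Continuous f) {a b x : ℝ} (hax : a ≤ x) (hxb : x ≤ b) :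
    ∫ t in a..b, f |x - t| = F (x - a) + F (b - x) - 2 * F 0 := by
  have hFTC (c : ℝ) : ∫ u in (0 : ℝ)..c, f u = F c - F 0 :=
    integral_eq_sub_of_hasDerivAt (fun u _ => hF u) (hf.intervalIntegrable _ _)
  have hleft : ∫ t in a..x, f |x - t| = F (x - a) - F 0 := by
    rw [integral_congr (g := fun t => f (x - t)) fun t ht => by
      rw [Set.uIcc_of_le hax] at ht; simp only [abs_of_nonneg (sub_nonneg.2 ht.2)]]
    simpa using hFTC (x - a)
  have hright : ∫ t in x..b, f |x - t| = F (b - x) - F 0 := by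
    rw [integral_congr (g := fun t => f (t - x)) fun t ht => by
      rw [Set.uIcc_of_le hxb] at ht; simp only [abs_sub_comm x, abs_of_nonneg (sub_nonneg.2 ht.1)]]
    simpa using hFTC (b - x)
  have hcont : Continuous fun t => f |x - t| := by fun_prop
  rw [← integral_add_adjacent_intervals (hcont.intervalIntegrable a x)
    (hcont.intervalIntegrable x b), hleft, hright]
  ring

theorem integral_integral_comp_abs_sub_of_hasDerivAt {f F G : ℝ → ℝ}
    (hF : ∀ u, HasDerivAt F (f u) u) (hG : ∀ u, HasDerivAt G (F u) u) (hf : Continuous f)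
    {a b : ℝ} (hab : a ≤ b) :
    ∫ x in a..b, ∫ t in a..b, f |x - t| = 2 * (G (b - a) - G 0 - (b - a) * F 0) := by
  have hFc : Continuous F := continuous_iff_continuousAt.2 fun u => (hF u).continuousAt
  have hFTC : ∫ u in (0 : ℝ)..(b - a), F u = G (b - a) - G 0 :=
    integral_eq_sub_of_hasDerivAt (fun u _ => hG u) (hFc.intervalIntegrable _ _)
  rw [integral_congr (g := fun x => F (x - a) + F (b - x) - 2 * F 0) fun x hx => by
    rw [Set.uIcc_of_le hab] at hx
    exact integral_comp_abs_sub_of_hasDerivAt hF hf hx.1 hx.2]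
  have hint {g : ℝ → ℝ} (hg : Continuous g) : IntervalIntegrable g MeasureTheory.volume a b :=
    hg.intervalIntegrable a b
  rw [integral_sub (hint (by fun_prop)) (hint (by fun_prop)),
    integral_add (hint (by fun_prop)) (hint (by fun_prop)),
    integral_comp_sub_right F a, integral_comp_sub_left F b]
  simp only [sub_self, hFTC, integral_const]
  ring

namespace Matern32Sq

variable (θ : ℝ)

noncomputable def profile (u : ℝ) : ℝ := (1 + θ * u) ^ 2 * Real.exp (-2 * θ * u)

noncomputable def primitive (u : ℝ) : ℝ :=
  (1 / (4 * θ)) * (5 - (5 + 6 * θ * u + 2 * θ ^ 2 * u ^ 2) * Real.exp (-2 * θ * u))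

noncomputable def secondPrimitive (u : ℝ) : ℝ :=
  5 * u / (4 * θ) + (9 / (8 * θ ^ 2) + u / θ + u ^ 2 / 4) * Real.exp (-2 * θ * u)

variable {θ}

theorem hasDerivAt_primitive (hθ : θ ≠ 0) (u : ℝ) :
    HasDerivAt (primitive θ) (profile θ u) u := by
  have hexp := ((hasDerivAt_id u).const_mul (-2 * θ)).exp
  have hpoly := (((hasDerivAt_id u).const_mul (6 * θ)).const_add 5).fun_add
    ((hasDerivAt_pow 2 u).const_mul (2 * θ ^ 2))
  refine (((hasDerivAt_const u 5).fun_sub (hpoly.fun_mul hexp)).const_mul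
    (1 / (4 * θ))).congr_deriv ?_
  simp only [profile, id]
  field_simp
  ring

theorem hasDerivAt_secondPrimitive (hθ : θ ≠ 0) (u : ℝ) :
    HasDerivAt (secondPrimitive θ) (primitive θ u) u := by
  have hexp := ((hasDerivAt_id u).const_mul (-2 * θ)).exp
  have hpoly := (((hasDerivAt_id u).div_const θ).const_add (9 / (8 * θ ^ 2))).fun_add
    ((hasDerivAt_pow 2 u).div_const 4)
  refine ((((hasDerivAt_id u).const_mul 5).div_const (4 * θ)).fun_add
    (hpoly.fun_mul hexp)).congr_deriv ?_
  simp only [primitive, id]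
  field_simp
  ring

theorem continuous_profile : Continuous (profile θ) := by
  unfold profile; fun_prop

@[simp] theorem primitive_zero : primitive θ 0 = 0 := by simp [primitive]

end Matern32Sq

open Matern32Sq

/-- Energy and potential of the uniform measure on `[0,1]` for the squared
Matérn 3/2 kernel:
`∫₀¹∫₀¹ (1 + θ|x-y|)² e^{-2θ|x-y|} dx dy = (1/(4θ²))[(2θ² + 8θ + 9)e^{-2θ} + 10θ - 9]`,
and for `x ∈ [0,1]`, `∫₀¹ (1 + θ|x-t|)² e^{-2θ|x-t|} dt = T_θ(x) + T_θ(1-x)` where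
`T_θ(u) = (1/(4θ))[5 - (5 + 6θu + 2θ²u²)e^{-2θu}]`. -/
theorem matern32_squared_energy_potential (θ : ℝ) (hθ : 0 < θ) :
    letI T : ℝ → ℝ := fun u =>
      (1 / (4 * θ)) * (5 - (5 + 6 * θ * u + 2 * θ ^ 2 * u ^ 2) * Real.exp (-2 * θ * u))
    (∫ x in (0:ℝ)..1, ∫ y in (0:ℝ)..1,
        (1 + θ * |x - y|) ^ 2 * Real.exp (-2 * θ * |x - y|)
      = 1 / (4 * θ ^ 2) * ((2 * θ ^ 2 + 8 * θ + 9) * Real.exp (-2 * θ) + 10 * θ - 9)) ∧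
    (∀ x ∈ Set.Icc (0:ℝ) 1,
      ∫ t in (0:ℝ)..1, (1 + θ * |x - t|) ^ 2 * Real.exp (-2 * θ * |x - t|)
        = T x + T (1 - x)) := by
  have hF := hasDerivAt_primitive hθ.ne'
  refine ⟨?_, fun x hx => ?_⟩
  · refine (integral_integral_comp_abs_sub_of_hasDerivAt hF
      (hasDerivAt_secondPrimitive hθ.ne') continuous_profile zero_le_one).trans ?_
    simp only [secondPrimitive, primitive_zero, sub_zero, mul_zero, mul_one, Real.exp_zero]
    field_simp
    ring
  · refine (integral_comp_abs_sub_of_hasDerivAt hF continuous_profile hx.1 hx.2).trans ?_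
    simp only [sub_zero, primitive_zero, mul_zero]
    rfl
end
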